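/- arXiv:math/0108047 — 12 statements merged into one kernel-verified Lean document; each statement's English description precedes it below -/
import Mathlib

section
/- Let Γ be a locally compact abelian group and ω ∈ Γⁿ. Suppose Ω_{i} = Γ for every i = 1,...,n, where Ω_{i} is the closure of the semigroup generated by ω₁,...,ωₙ and -ωᵢ. Then every ω-invariant subset of Γ is either empty or all of Γ. -/
def IsOmegaInvariant {Γ : Type*} [TopologicalSpace Γ] [AddCommGroup Γ] {n : ℕ}
    (ω : Fin n → Γ) (X : Set Γ) : Prop :=
  IsClosed X ∧ (∀ γ ∈ X, ∀ i, γ + ω i ∈ X) ∧ (∀ γ ∈ X, ∃ i, γ - ω i ∈ X)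

noncomputable def OmegaI {Γ : Type*} [TopologicalSpace Γ] [AddCommGroup Γ] {n : ℕ}
    (ω : Fin n → Γ) (I : Set (Fin n)) : Set Γ :=
  closure (AddSubsemigroup.closure (Set.range ω ∪ (fun i => -ω i) '' I) : Set Γ)

theorem stmt3 {Γ : Type*} [TopologicalSpace Γ] [AddCommGroup Γ] [IsTopologicalAddGroup Γ]
    [LocallyCompactSpace Γ] {n : ℕ} (ω : Fin n → Γ)
    (h : ∀ i : Fin n, OmegaI ω {i} = Set.univ) :
    ∀ X : Set Γ, IsOmegaInvariant ω X → X = ∅ ∨ X = Set.univ := by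
  intro X hX
  rcases X.eq_empty_or_nonempty with hE | ⟨γ₀, hγ₀⟩
  · exact Or.inl hE
  right
  obtain ⟨hXc, hfwd, hbwd⟩ := hX
  set P := AddSubmonoid.closure (Set.range ω) with hP
  have forward : ∀ p ∈ P, ∀ x ∈ X, x + p ∈ X := by
    intro p hp
    induction hp using AddSubmonoid.closure_induction with
    | mem y hy =>
        obtain ⟨j, rfl⟩ := hy
        exact fun x hx => hfwd x hx j
    | zero => intro x hx; simpa using hx
    | add a b _ _ iha ihb =>
        intro x hx
        have := ihb (x + a) (iha x hx)
        rwa [add_assoc] at this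
  -- backward chain
  let F : ℕ → {x : Γ // x ∈ X} := fun k =>
    Nat.rec ⟨γ₀, hγ₀⟩
      (fun _ p => ⟨p.1 - ω (hbwd p.1 p.2).choose, (hbwd p.1 p.2).choose_spec⟩) k
  let idx : ℕ → Fin n := fun k => (hbwd (F k).1 (F k).2).choose
  have hFsucc : ∀ k, (F (k+1)).1 = (F k).1 - ω (idx k) := fun k => rfl
  have hFsum : ∀ k, (F k).1 = γ₀ - ∑ j ∈ Finset.range k, ω (idx j) := by
    intro k
    induction k with
    | zero => simp [F]
    | succ k ih => rw [hFsucc, ih, Finset.sum_range_succ]; abel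
  haveI : Nonempty (Fin n) := ⟨idx 0⟩
  obtain ⟨i, hi⟩ := Finite.exists_infinite_fiber idx
  have hinf : (idx ⁻¹' {i}).Infinite := Set.infinite_coe_iff.mp hi
  have key : ∀ m : ℕ, γ₀ - m • ω i ∈ X := by
    intro m
    obtain ⟨t, htsub, htcard⟩ := hinf.exists_subset_card_eq m
    set k := t.sup id + 1 with hk
    have htk : t ⊆ Finset.filter (fun j => idx j = i) (Finset.range k) := by
      intro j hj
      refine Finset.mem_filter.mpr ⟨Finset.mem_range.mpr ?_, htsub hj⟩
      exact Nat.lt_succ_of_le (Finset.le_sup (f := id) hj)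
    set c := (Finset.filter (fun j => idx j = i) (Finset.range k)).card with hc
    have hcm : m ≤ c := htcard ▸ Finset.card_le_card htk
    have hsplit : ∑ j ∈ Finset.range k, ω (idx j) =
        c • ω i + ∑ j ∈ Finset.filter (fun j => ¬ idx j = i) (Finset.range k), ω (idx j) := by
      rw [← Finset.sum_filter_add_sum_filter_not (Finset.range k) (fun j => idx j = i)]
      congr 1
      rw [Finset.sum_congr rfl (fun j hj => by rw [(Finset.mem_filter.mp hj).2]),
        Finset.sum_const, hc]
    set q := ∑ j ∈ Finset.filter (fun j => ¬ idx j = i) (Finset.range k), ω (idx j) with hq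
    have hqP : q ∈ P := AddSubmonoid.sum_mem _ fun j _ =>
      AddSubmonoid.subset_closure ⟨idx j, rfl⟩
    have h1 : γ₀ - c • ω i - q ∈ X := by
      have := (F k).2
      rw [hFsum k, hsplit] at this
      convert this using 1
      abel
    have h2 : γ₀ - c • ω i ∈ X := by
      have := forward q hqP _ h1
      simpa using this
    have h3 := forward ((c - m) • ω i) (AddSubmonoid.nsmul_mem P
      (AddSubmonoid.subset_closure ⟨i, rfl⟩) _) _ h2
    have hce : c • ω i = m • ω i + (c - m) • ω i := by
      rw [← add_nsmul, Nat.add_sub_cancel' hcm]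
    have hgoal : γ₀ - m • ω i = γ₀ - c • ω i + (c - m) • ω i := by
      rw [hce]; abel
    rw [hgoal]; exact h3
  -- combine
  let Q : AddSubsemigroup Γ :=
    { carrier := {s | ∃ m : ℕ, ∃ p ∈ P, s = p - m • ω i}
      add_mem' := by
        rintro a b ⟨m, p, hp, rfl⟩ ⟨m', p', hp', rfl⟩
        exact ⟨m + m', p + p', P.add_mem hp hp', by rw [add_nsmul]; abel⟩ }
  have hgen : Set.range ω ∪ (fun i => -ω i) '' ({i} : Set (Fin n)) ⊆ (Q : Set Γ) := by
    rintro s (⟨j, rfl⟩ | ⟨j, hj, rfl⟩)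
    · exact ⟨0, ω j, AddSubmonoid.subset_closure ⟨j, rfl⟩, by simp⟩
    · rcases hj with rfl
      exact ⟨1, 0, zero_mem P, by simp⟩
  have hQle : (AddSubsemigroup.closure
      (Set.range ω ∪ (fun i => -ω i) '' ({i} : Set (Fin n))) : Set Γ) ⊆ (Q : Set Γ) :=
    AddSubsemigroup.closure_le.mpr hgen
  have hYc : IsClosed {s : Γ | γ₀ + s ∈ X} := hXc.preimage (continuous_add_left γ₀)
  have hQY : (Q : Set Γ) ⊆ {s : Γ | γ₀ + s ∈ X} := by
    rintro s ⟨m, p, hp, rfl⟩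
    have := forward p hp _ (key m)
    show γ₀ + (p - m • ω i) ∈ X
    convert this using 1
    abel
  have huniv : (Set.univ : Set Γ) ⊆ {s : Γ | γ₀ + s ∈ X} := by
    rw [← h i]
    exact closure_minimal (hQle.trans hQY) hYc
  ext δ
  simp only [Set.mem_univ, iff_true]
  have := huniv (Set.mem_univ (δ - γ₀))
  simpa using this
end

section
/- Let Γ be a locally compact abelian group and ω ∈ Γⁿ. If every ω-invariant subset of Γ is empty or Γ, then Ω_{i} = Γ for every i = 1,...,n, where Ω_{i} is the closure of the semigroup generated by ω₁,...,ωₙ and -ωᵢ. -/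
theorem stmt4 {Γ : Type*} [TopologicalSpace Γ] [AddCommGroup Γ] [IsTopologicalAddGroup Γ]
    [LocallyCompactSpace Γ] {n : ℕ} (ω : Fin n → Γ)
    (h : ∀ X : Set Γ, IsOmegaInvariant ω X → X = ∅ ∨ X = Set.univ) :
    ∀ i : Fin n, OmegaI ω {i} = Set.univ := by
  intro i
  set S : Set Γ := Set.range ω ∪ (fun i => -ω i) '' ({i} : Set (Fin n)) with hS
  set H := AddSubsemigroup.closure S with hH
  have hωmem : ∀ j, ω j ∈ H := fun j =>
    AddSubsemigroup.subset_closure (Or.inl ⟨j, rfl⟩)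
  have hnegmem : -ω i ∈ H :=
    AddSubsemigroup.subset_closure (Or.inr ⟨i, rfl, rfl⟩)
  have hinv : IsOmegaInvariant ω (OmegaI ω {i}) := by
    refine ⟨isClosed_closure, ?_, ?_⟩
    · intro γ hγ j
      have hγ' : γ ∈ closure (H : Set Γ) := hγ
      exact map_mem_closure (f := fun x => x + ω j)
        (continuous_id.add continuous_const) hγ'
        (fun x hx => H.add_mem hx (hωmem j))
    · intro γ hγ
      refine ⟨i, ?_⟩
      have hγ' : γ ∈ closure (H : Set Γ) := hγ
      have : γ + (-ω i) ∈ closure (H : Set Γ) :=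
        map_mem_closure (f := fun x => x + (-ω i))
          (continuous_id.add continuous_const) hγ'
          (fun x hx => H.add_mem hx hnegmem)
      rw [sub_eq_add_neg]; exact this
  rcases h _ hinv with h0 | h1
  · exfalso
    have : ω i ∈ OmegaI ω {i} := subset_closure (hωmem i)
    simp [h0] at this
  · exact h1
end

section
/- Let Γ be a locally compact abelian group and ω ∈ Γⁿ. An ω-invariant set of the form X = γ + Ω_𝕀, where γ ∈ Γ and 𝕀 ⊆ {1,...,n} is non-empty, is prime: whenever X₁, X₂ are ω-invariant sets with X ⊆ X₁ ∪ X₂, then X ⊆ X₁ or X ⊆ X₂. -/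
theorem stmt8 {Γ : Type*} [TopologicalSpace Γ] [AddCommGroup Γ] [IsTopologicalAddGroup Γ]
    [LocallyCompactSpace Γ] {n : ℕ} (ω : Fin n → Γ) (γ : Γ)
    (I : Set (Fin n)) (hI : I.Nonempty) :
    ∀ X₁ X₂ : Set Γ, IsOmegaInvariant ω X₁ → IsOmegaInvariant ω X₂ →
      (fun x => γ + x) '' OmegaI ω I ⊆ X₁ ∪ X₂ →
      (fun x => γ + x) '' OmegaI ω I ⊆ X₁ ∨ (fun x => γ + x) '' OmegaI ω I ⊆ X₂ := by
  classical
  intro X₁ X₂ h₁ h₂ hcov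
  obtain ⟨i₀, hi₀⟩ := hI
  set T : AddSubsemigroup Γ :=
    AddSubsemigroup.closure (Set.range ω ∪ (fun i => -ω i) '' I) with hTdef
  set M : AddSubmonoid Γ := AddSubmonoid.closure (Set.range ω) with hMdef
  have hωT : ∀ j, ω j ∈ T := fun j =>
    AddSubsemigroup.subset_closure (Or.inl ⟨j, rfl⟩)
  have hnegT : ∀ i ∈ I, -ω i ∈ T := fun i hi =>
    AddSubsemigroup.subset_closure (Or.inr ⟨i, hi, rfl⟩)
  have hωM : ∀ j, ω j ∈ M := fun j => AddSubmonoid.subset_closure ⟨j, rfl⟩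
  have hzeroT : (0 : Γ) ∈ T := by
    have := T.add_mem (hωT i₀) (hnegT i₀ hi₀)
    simpa using this
  -- T together with 0 is a submonoid
  set M' : AddSubmonoid Γ :=
    { carrier := (T : Set Γ)
      add_mem' := fun ha hb => T.add_mem ha hb
      zero_mem' := hzeroT } with hM'def
  set If : Finset (Fin n) := I.toFinite.toFinset with hIf
  have hi₀f : i₀ ∈ If := by simpa [hIf, Set.Finite.mem_toFinset] using hi₀
  set s : Γ := ∑ i ∈ If, ω i with hs
  have hsM : s ∈ M := AddSubmonoid.sum_mem M (fun i _ => hωM i)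
  have hnegsT : -s ∈ M' := by
    have h1 : -s = ∑ i ∈ If, -ω i := by rw [hs]; exact (Finset.sum_neg_distrib _).symm
    rw [h1]
    refine AddSubmonoid.sum_mem M' (fun i hi => ?_)
    exact hnegT i (by simpa [hIf, Set.Finite.mem_toFinset] using hi)
  have hksT : ∀ k : ℕ, γ - k • s ∈ (fun x => γ + x) '' OmegaI ω I := by
    intro k
    refine ⟨-(k • s), ?_, by rw [sub_eq_add_neg]⟩
    have : -(k • s) = k • (-s) := by rw [smul_neg]
    rw [this]
    exact subset_closure (AddSubmonoid.nsmul_mem M' hnegsT k)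
  -- forward invariance under the monoid generated by the ω's
  have forward : ∀ X : Set Γ, IsOmegaInvariant ω X → ∀ m ∈ M, ∀ x ∈ X, x + m ∈ X := by
    intro X hX m hm
    induction hm using AddSubmonoid.closure_induction with
    | mem z hz =>
      obtain ⟨j, rfl⟩ := hz
      exact fun x hx => hX.2.1 x hx j
    | zero => intro x hx; simpa using hx
    | add a b _ _ ha hb =>
      intro x hx
      have := hb _ (ha x hx)
      rwa [add_assoc] at this
  -- every element of T becomes an element of M after adding enough copies of s
  have claimB : ∀ t ∈ T, ∃ K : ℕ, t + K • s ∈ M := by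
    intro t ht
    induction ht using AddSubsemigroup.closure_induction with
    | mem z hz =>
      rcases hz with ⟨j, rfl⟩ | ⟨i, hi, rfl⟩
      · exact ⟨0, by simpa using hωM j⟩
      · refine ⟨1, ?_⟩
        have hif : i ∈ If := by simpa [hIf, Set.Finite.mem_toFinset] using hi
        have h1 : -ω i + (1 : ℕ) • s = ∑ j ∈ If.erase i, ω j := by
          rw [one_nsmul, hs, ← Finset.add_sum_erase If ω hif]
          abel
        rw [h1]
        exact AddSubmonoid.sum_mem M (fun j _ => hωM j)
    | add a b _ _ ha hb =>
      obtain ⟨K₁, hK₁⟩ := ha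
      obtain ⟨K₂, hK₂⟩ := hb
      refine ⟨K₁ + K₂, ?_⟩
      have h1 : a + b + (K₁ + K₂) • s = (a + K₁ • s) + (b + K₂ • s) := by
        rw [add_nsmul]; abel
      rw [h1]
      exact M.add_mem hK₁ hK₂
  -- key step
  have key : ∀ X : Set Γ, IsOmegaInvariant ω X →
      (∀ N : ℕ, ∃ k ≥ N, γ - k • s ∈ X) →
      (fun x => γ + x) '' OmegaI ω I ⊆ X := by
    intro X hX hfreq x hx
    obtain ⟨u, hu, rfl⟩ := hx
    have hu' : u ∈ closure (T : Set Γ) := hu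
    have hsub : (T : Set Γ) ⊆ (fun x => γ + x) ⁻¹' X := by
      intro t ht
      obtain ⟨K, hK⟩ := claimB t ht
      obtain ⟨k, hkK, hkmem⟩ := hfreq K
      obtain ⟨d, rfl⟩ : ∃ d, k = K + d := ⟨k - K, by omega⟩
      have htM : t + (K + d) • s ∈ M := by
        have h1 : t + (K + d) • s = (t + K • s) + d • s := by rw [add_nsmul]; abel
        rw [h1]
        exact M.add_mem hK (AddSubmonoid.nsmul_mem M hsM d)
      have := forward X hX _ htM _ hkmem
      have h2 : γ - (K + d) • s + (t + (K + d) • s) = γ + t := by abel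
      rwa [h2] at this
    have hclosed : IsClosed ((fun x => γ + x) ⁻¹' X) :=
      hX.1.preimage (continuous_const.add continuous_id)
    exact hclosed.closure_subset_iff.mpr hsub hu'
  by_cases hP : ∀ N : ℕ, ∃ k ≥ N, γ - k • s ∈ X₁
  · exact Or.inl (key X₁ h₁ hP)
  · push_neg at hP
    obtain ⟨N₀, hN₀⟩ := hP
    refine Or.inr (key X₂ h₂ (fun N => ⟨max N N₀, le_max_left _ _, ?_⟩))
    have hmem := hcov (hksT (max N N₀))
    rcases hmem with h | h
    · exact absurd h (hN₀ _ (le_max_right _ _))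
    · exact h
end

section
/- Let Γ be a second-countable locally compact abelian group and ω ∈ Γⁿ. If a non-empty ω-invariant set X satisfies: for any γ₀, γ₁ ∈ X and any neighborhoods U₀ of γ₀ and U₁ of γ₁, there exist γ ∈ X and finite words μ, ν with γ + ω_μ ∈ U₀ and γ + ω_ν ∈ U₁ — then X is prime. -/
lemma word_invariant {Γ : Type*} [AddCommGroup Γ] {n : ℕ} (ω : Fin n → Γ)
    (Y : Set Γ) (hY : ∀ γ ∈ Y, ∀ i, γ + ω i ∈ Y) :
    ∀ (μ : List (Fin n)) (γ : Γ), γ ∈ Y → γ + (μ.map ω).sum ∈ Y := by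
  intro μ
  induction μ with
  | nil => intro γ hγ; simpa using hγ
  | cons i μ ih =>
      intro γ hγ
      have := ih (γ + ω i) (hY γ hγ i)
      simpa [add_assoc] using this

theorem stmt9 {Γ : Type*} [TopologicalSpace Γ] [AddCommGroup Γ] [IsTopologicalAddGroup Γ]
    [LocallyCompactSpace Γ] [SecondCountableTopology Γ] {n : ℕ} (ω : Fin n → Γ)
    (X : Set Γ) (hne : X.Nonempty) (hX : IsOmegaInvariant ω X)
    (h : ∀ γ₀ ∈ X, ∀ γ₁ ∈ X, ∀ U₀ ∈ nhds γ₀, ∀ U₁ ∈ nhds γ₁,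
        ∃ γ ∈ X, ∃ μ ν : List (Fin n),
          γ + (μ.map ω).sum ∈ U₀ ∧ γ + (ν.map ω).sum ∈ U₁) :
    ∀ X₁ X₂ : Set Γ, IsOmegaInvariant ω X₁ → IsOmegaInvariant ω X₂ →
      X ⊆ X₁ ∪ X₂ → X ⊆ X₁ ∨ X ⊆ X₂ := by
  intro X₁ X₂ h₁ h₂ hsub
  by_contra hcon
  push_neg at hcon
  obtain ⟨hA, hB⟩ := hcon
  rw [Set.not_subset] at hA hB
  obtain ⟨γ₀, hγ₀X, hγ₀⟩ := hA
  obtain ⟨γ₁, hγ₁X, hγ₁⟩ := hB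
  have hU₀ : X₁ᶜ ∈ nhds γ₀ := h₁.1.isOpen_compl.mem_nhds hγ₀
  have hU₁ : X₂ᶜ ∈ nhds γ₁ := h₂.1.isOpen_compl.mem_nhds hγ₁
  obtain ⟨γ, hγX, μ, ν, hμ, hν⟩ := h γ₀ hγ₀X γ₁ hγ₁X _ hU₀ _ hU₁
  rcases hsub hγX with hγ1 | hγ2
  · exact hμ (word_invariant ω X₁ h₁.2.1 μ γ hγ1)
  · exact hν (word_invariant ω X₂ h₂.2.1 ν γ hγ2)
end

section
/- Let Γ be a second-countable locally compact abelian group and ω ∈ Γⁿ. If X is a non-empty prime ω-invariant subset of Γ, then for any γ₀, γ₁ ∈ X and any neighborhoods U₀ of γ₀, U₁ of γ₁, there exist γ ∈ X and finite words μ, ν over {1,...,n} such that γ + ω_μ ∈ U₀ and γ + ω_ν ∈ U₁. -/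
namespace Stmt10Aux

variable {Γ : Type*} [TopologicalSpace Γ] [AddCommGroup Γ] [IsTopologicalAddGroup Γ] {n : ℕ}

/-- Points of `X` whose forward orbit (over all words) avoids `V`. -/
def Xi (ω : Fin n → Γ) (X V : Set Γ) : Set Γ :=
  {γ | γ ∈ X ∧ ∀ μ : List (Fin n), γ + (μ.map ω).sum ∉ V}

/-- Points admitting a backward chain of length `k` inside `Xi ω X V`. -/
def C (ω : Fin n → Γ) (X V : Set Γ) (k : ℕ) : Set Γ :=
  {γ | ∃ μ : List (Fin n), μ.length = k ∧
    ∀ m ≤ k, γ - ((μ.map ω).take m).sum ∈ Xi ω X V}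

def Xt (ω : Fin n → Γ) (X V : Set Γ) : Set Γ := ⋂ k, C ω X V k

theorem Xi_closed {ω : Fin n → Γ} {X V : Set Γ} (hXc : IsClosed X) (hV : IsOpen V) :
    IsClosed (Xi ω X V) := by
  have h : Xi ω X V = X ∩ ⋂ μ : List (Fin n), (fun γ => γ + (μ.map ω).sum) ⁻¹' Vᶜ := by
    ext γ
    simp [Xi, Set.mem_iInter]
  rw [h]
  exact hXc.inter (isClosed_iInter fun μ =>
    (hV.isClosed_compl).preimage (continuous_id.add continuous_const))

theorem Xi_forward {ω : Fin n → Γ} {X V : Set Γ} (hX : IsOmegaInvariant ω X)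
    {γ : Γ} (h : γ ∈ Xi ω X V) (i : Fin n) : γ + ω i ∈ Xi ω X V := by
  refine ⟨hX.2.1 γ h.1 i, fun μ hmem => h.2 (i :: μ) ?_⟩
  rw [List.map_cons, List.sum_cons, ← add_assoc]
  exact hmem

theorem C_subset_Xi {ω : Fin n → Γ} {X V : Set Γ} {k : ℕ} :
    C ω X V k ⊆ Xi ω X V := by
  rintro γ ⟨μ, hlen, hm⟩
  have := hm 0 (Nat.zero_le _)
  simpa using this

theorem C_closed {ω : Fin n → Γ} {X V : Set Γ} (hXc : IsClosed X) (hV : IsOpen V) (k : ℕ) :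
    IsClosed (C ω X V k) := by
  have h : C ω X V k = ⋃ μ ∈ {l : List (Fin n) | l.length = k},
      ⋂ m, ⋂ (_ : m ≤ k), (fun γ => γ - ((μ.map ω).take m).sum) ⁻¹' Xi ω X V := by
    ext γ
    simp [C, Set.mem_iUnion]
  rw [h]
  exact (List.finite_length_eq _ _).isClosed_biUnion fun μ _ =>
    isClosed_iInter fun m => isClosed_iInter fun _ =>
      (Xi_closed hXc hV).preimage (continuous_id.sub continuous_const)

theorem C_anti {ω : Fin n → Γ} {X V : Set Γ} {k : ℕ} :
    C ω X V (k + 1) ⊆ C ω X V k := by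
  rintro γ ⟨μ, hlen, hm⟩
  refine ⟨μ.take k, by simp [hlen], fun m hmk => ?_⟩
  have heq : (((μ.take k).map ω).take m) = (μ.map ω).take m := by
    rw [List.map_take, List.take_take, min_eq_left hmk]
  rw [heq]
  exact hm m (le_trans hmk (Nat.le_succ k))

theorem C_anti_le {ω : Fin n → Γ} {X V : Set Γ} {k k' : ℕ} (h : k ≤ k') :
    C ω X V k' ⊆ C ω X V k := by
  induction k' with
  | zero => simpa [Nat.le_zero.mp h] using subset_rfl
  | succ k'' ih =>
    rcases Nat.lt_or_ge k (k'' + 1) with h' | h'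
    · exact Set.Subset.trans C_anti (ih (Nat.lt_succ_iff.mp h'))
    · have hk : k = k'' + 1 := le_antisymm h h'
      subst hk; exact subset_rfl

theorem C_forward {ω : Fin n → Γ} {X V : Set Γ} (hX : IsOmegaInvariant ω X) {k : ℕ}
    {γ : Γ} (h : γ ∈ C ω X V k) (i : Fin n) : γ + ω i ∈ C ω X V (k + 1) := by
  obtain ⟨μ, hlen, hm⟩ := h
  refine ⟨i :: μ, by simp [hlen], fun m hmk => ?_⟩
  cases m with
  | zero =>
    have hγ : γ ∈ Xi ω X V := by simpa using hm 0 (Nat.zero_le _)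
    simpa using Xi_forward hX hγ i
  | succ m' =>
    have hm' : m' ≤ k := Nat.succ_le_succ_iff.mp hmk
    have heq : (γ + ω i) - (((i :: μ).map ω).take (m' + 1)).sum
        = γ - ((μ.map ω).take m').sum := by
      rw [List.map_cons, List.take_succ_cons, List.sum_cons]
      abel
    rw [heq]
    exact hm m' hm'

theorem C_backward {ω : Fin n → Γ} {X V : Set Γ} {k : ℕ} {γ : Γ}
    (h : γ ∈ C ω X V (k + 1)) : ∃ i, γ - ω i ∈ C ω X V k := by
  obtain ⟨μ, hlen, hm⟩ := h
  cases μ with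
  | nil => simp at hlen
  | cons i ρ =>
    refine ⟨i, ρ, by simpa using hlen, fun m hmk => ?_⟩
    have heq : (γ - ω i) - ((ρ.map ω).take m).sum
        = γ - (((i :: ρ).map ω).take (m + 1)).sum := by
      rw [List.map_cons, List.take_succ_cons, List.sum_cons]
      abel
    rw [heq]
    exact hm (m + 1) (Nat.succ_le_succ hmk)

theorem Xt_invariant {ω : Fin n → Γ} {X V : Set Γ}
    (hX : IsOmegaInvariant ω X) (hV : IsOpen V) :
    IsOmegaInvariant ω (Xt ω X V) := by
  refine ⟨isClosed_iInter fun k => C_closed hX.1 hV k, ?_, ?_⟩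
  · intro γ hγ i
    have hγ' : ∀ k, γ ∈ C ω X V k := fun k => Set.mem_iInter.mp hγ k
    exact Set.mem_iInter.mpr fun k => C_anti (C_forward hX (hγ' k) i)
  · intro γ hγ
    have hγ' : ∀ k, γ ∈ C ω X V k := fun k => Set.mem_iInter.mp hγ k
    have hstep : ∀ k : ℕ, ∃ i, γ - ω i ∈ C ω X V k := fun k => C_backward (hγ' (k + 1))
    choose f hf using hstep
    obtain ⟨i, hi⟩ := Finite.exists_infinite_fiber f
    rw [Set.infinite_coe_iff] at hi
    refine ⟨i, Set.mem_iInter.mpr fun k => ?_⟩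
    obtain ⟨k', hk'mem, hk'⟩ := hi.exists_gt k
    have hmem : γ - ω i ∈ C ω X V k' := by
      have h2 := hf k'
      rwa [show f k' = i from hk'mem] at h2
    exact C_anti_le hk'.le hmem

end Stmt10Aux

open Stmt10Aux in
theorem stmt10 {Γ : Type*} [TopologicalSpace Γ] [AddCommGroup Γ] [IsTopologicalAddGroup Γ]
    [LocallyCompactSpace Γ] [SecondCountableTopology Γ] {n : ℕ} (ω : Fin n → Γ)
    (X : Set Γ) (hne : X.Nonempty) (hX : IsOmegaInvariant ω X)
    (hprime : ∀ X₁ X₂ : Set Γ, IsOmegaInvariant ω X₁ → IsOmegaInvariant ω X₂ →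
      X ⊆ X₁ ∪ X₂ → X ⊆ X₁ ∨ X ⊆ X₂) :
    ∀ γ₀ ∈ X, ∀ γ₁ ∈ X, ∀ U₀ ∈ nhds γ₀, ∀ U₁ ∈ nhds γ₁,
      ∃ γ ∈ X, ∃ μ ν : List (Fin n),
        γ + (μ.map ω).sum ∈ U₀ ∧ γ + (ν.map ω).sum ∈ U₁ := by
  intro γ₀ hγ₀ γ₁ hγ₁ U₀ hU₀ U₁ hU₁
  by_contra hcon
  push_neg at hcon
  set V₀ := interior U₀ with hV₀def
  set V₁ := interior U₁ with hV₁def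
  have hV₀ : IsOpen V₀ := isOpen_interior
  have hV₁ : IsOpen V₁ := isOpen_interior
  -- The cover X ⊆ Xt V₀ ∪ Xt V₁
  have hcover : X ⊆ Xt ω X V₀ ∪ Xt ω X V₁ := by
    intro γ hγ
    -- build an infinite backward chain in X
    let step : {x : Γ // x ∈ X} → {x : Γ // x ∈ X} := fun x =>
      ⟨x.1 - ω (Classical.choose (hX.2.2 x.1 x.2)), Classical.choose_spec (hX.2.2 x.1 x.2)⟩
    let d : ℕ → {x : Γ // x ∈ X} := fun k => step^[k] ⟨γ, hγ⟩
    let j : ℕ → Fin n := fun k => Classical.choose (hX.2.2 (d k).1 (d k).2)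
    have hd0 : (d 0).1 = γ := rfl
    have hstep : ∀ k, (d (k + 1)).1 = (d k).1 - ω (j k) := by
      intro k
      show ((step^[k + 1]) ⟨γ, hγ⟩).1 = _
      rw [Function.iterate_succ_apply']
    -- each chain element lies in Xi V₀ or Xi V₁
    have hsplit : ∀ k, (d k).1 ∈ Xi ω X V₀ ∨ (d k).1 ∈ Xi ω X V₁ := by
      intro k
      by_contra hc
      push_neg at hc
      obtain ⟨hc₀, hc₁⟩ := hc
      have hX0 : ∃ μ : List (Fin n), (d k).1 + (μ.map ω).sum ∈ V₀ := by
        by_contra hno; push_neg at hno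
        exact hc₀ ⟨(d k).2, hno⟩
      have hX1 : ∃ ν : List (Fin n), (d k).1 + (ν.map ω).sum ∈ V₁ := by
        by_contra hno; push_neg at hno
        exact hc₁ ⟨(d k).2, hno⟩
      obtain ⟨μ, hμ⟩ := hX0
      obtain ⟨ν, hν⟩ := hX1
      exact hcon (d k).1 (d k).2 μ ν (interior_subset hμ) (interior_subset hν)
    -- propagation up the chain
    have hprop : ∀ (V : Set Γ) (k : ℕ), (d (k + 1)).1 ∈ Xi ω X V → (d k).1 ∈ Xi ω X V := by
      intro V k h
      have h2 := Xi_forward hX h (j k)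
      rw [hstep k, sub_add_cancel] at h2
      exact h2
    have hprop' : ∀ (V : Set Γ) (k t : ℕ), (d (k + t)).1 ∈ Xi ω X V → (d k).1 ∈ Xi ω X V := by
      intro V k t
      induction t with
      | zero => exact fun h => h
      | succ t' ih => exact fun h => ih (hprop V (k + t') h)
    -- prefix word lists
    let jl : ℕ → List (Fin n) := fun k => Nat.rec [] (fun k' l => l ++ [j k']) k
    have hjl0 : jl 0 = [] := rfl
    have hjlsucc : ∀ k, jl (k + 1) = jl k ++ [j k] := fun _ => rfl
    have hjllen : ∀ k, (jl k).length = k := by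
      intro k
      induction k with
      | zero => rfl
      | succ k' ih => simp [hjlsucc, ih]
    have hjlsum : ∀ k, (d k).1 = γ - ((jl k).map ω).sum := by
      intro k
      induction k with
      | zero => simp [hd0, hjl0]
      | succ k' ih =>
        rw [hstep k', ih, hjlsucc, List.map_append, List.sum_append]
        simp [sub_sub]
    have hjltake : ∀ k m, m ≤ k → (jl k).take m = jl m := by
      intro k
      induction k with
      | zero => intro m hm; rw [Nat.le_zero.mp hm]; rfl
      | succ k' ih =>
        intro m hm
        rcases Nat.lt_or_ge m (k' + 1) with h' | h'
        · have hm' : m ≤ k' := Nat.lt_succ_iff.mp h'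
          rw [hjlsucc, List.take_append_of_le_length (by rw [hjllen]; exact hm')]
          exact ih m hm'
        · have hmk : m = k' + 1 := le_antisymm hm h'
          subst hmk
          rw [List.take_of_length_le (le_of_eq (hjllen _))]
    -- if every chain element is in Xi V, then γ ∈ Xt V
    have hmemC : ∀ (V : Set Γ), (∀ m : ℕ, (d m).1 ∈ Xi ω X V) → γ ∈ Xt ω X V := by
      intro V hall
      refine Set.mem_iInter.mpr fun k => ⟨jl k, hjllen k, fun m hm => ?_⟩
      have heq : ((jl k).map ω).take m = (jl m).map ω := by
        rw [← List.map_take, hjltake k m hm]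
      rw [heq, ← hjlsum m]
      exact hall m
    by_cases hA : ∀ k, ∃ k', k ≤ k' ∧ (d k').1 ∈ Xi ω X V₀
    · left
      refine hmemC V₀ fun m => ?_
      obtain ⟨k', hk', hmem⟩ := hA m
      obtain ⟨t, rfl⟩ := Nat.exists_eq_add_of_le hk'
      exact hprop' V₀ m t hmem
    · right
      push_neg at hA
      obtain ⟨K, hK⟩ := hA
      refine hmemC V₁ fun m => ?_
      have h1 : (d (m + K)).1 ∈ Xi ω X V₁ := by
        rcases hsplit (m + K) with h | h
        · exact absurd h (hK (m + K) (Nat.le_add_left K m))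
        · exact h
      exact hprop' V₁ m K h1
  rcases hprime _ _ (Xt_invariant hX hV₀) (Xt_invariant hX hV₁) hcover with h | h
  · have h0 : γ₀ ∈ Xi ω X V₀ := C_subset_Xi (Set.mem_iInter.mp (h hγ₀) 0)
    exact h0.2 [] (by simpa using mem_interior_iff_mem_nhds.mpr hU₀)
  · have h1 : γ₁ ∈ Xi ω X V₁ := C_subset_Xi (Set.mem_iInter.mp (h hγ₁) 0)
    exact h1.2 [] (by simpa using mem_interior_iff_mem_nhds.mpr hU₁)
end

section
/- Let Γ be a locally compact abelian group, ω ∈ Γⁿ, γ₁, γ₂ ∈ Γ, and 𝕀₁, 𝕀₂ non-empty subsets of {1,...,n}. Then γ₁ + Ω_{𝕀₁} = γ₂ + Ω_{𝕀₂} if and only if Ω_{𝕀₁} = Ω_{𝕀₂} and γ₁ - γ₂ ∈ Ω_{𝕀₁} ∩ (-Ω_{𝕀₁}). -/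
open Pointwise

lemma OmegaI_add_mem {Γ : Type*} [TopologicalSpace Γ] [AddCommGroup Γ]
    [IsTopologicalAddGroup Γ] {n : ℕ} {ω : Fin n → Γ} {I : Set (Fin n)} {a b : Γ}
    (ha : a ∈ OmegaI ω I) (hb : b ∈ OmegaI ω I) : a + b ∈ OmegaI ω I :=
  (AddSubsemigroup.closure (Set.range ω ∪ (fun i => -ω i) '' I)).topologicalClosure.add_mem
    ha hb

lemma OmegaI_zero_mem {Γ : Type*} [TopologicalSpace Γ] [AddCommGroup Γ]
    [IsTopologicalAddGroup Γ] {n : ℕ} {ω : Fin n → Γ} {I : Set (Fin n)}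
    (hI : I.Nonempty) : (0 : Γ) ∈ OmegaI ω I := by
  obtain ⟨i, hi⟩ := hI
  have h1 : ω i ∈ AddSubsemigroup.closure (Set.range ω ∪ (fun i => -ω i) '' I) :=
    AddSubsemigroup.subset_closure (Or.inl ⟨i, rfl⟩)
  have h2 : -ω i ∈ AddSubsemigroup.closure (Set.range ω ∪ (fun i => -ω i) '' I) :=
    AddSubsemigroup.subset_closure (Or.inr ⟨i, hi, rfl⟩)
  have h3 : ω i + -ω i ∈ AddSubsemigroup.closure (Set.range ω ∪ (fun i => -ω i) '' I) :=
    AddSubsemigroup.add_mem _ h1 h2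
  rw [add_neg_cancel] at h3
  exact subset_closure h3

theorem stmt11 {Γ : Type*} [TopologicalSpace Γ] [AddCommGroup Γ] [IsTopologicalAddGroup Γ]
    [LocallyCompactSpace Γ] {n : ℕ} (ω : Fin n → Γ) (γ₁ γ₂ : Γ)
    (I₁ I₂ : Set (Fin n)) (hI₁ : I₁.Nonempty) (hI₂ : I₂.Nonempty) :
    (fun x => γ₁ + x) '' OmegaI ω I₁ = (fun x => γ₂ + x) '' OmegaI ω I₂ ↔
      OmegaI ω I₁ = OmegaI ω I₂ ∧ γ₁ - γ₂ ∈ OmegaI ω I₁ ∩ (-(OmegaI ω I₁)) := by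
  set S₁ := OmegaI ω I₁ with hS₁
  set S₂ := OmegaI ω I₂ with hS₂
  set δ := γ₁ - γ₂ with hδ
  have h01 : (0 : Γ) ∈ S₁ := OmegaI_zero_mem hI₁
  have h02 : (0 : Γ) ∈ S₂ := OmegaI_zero_mem hI₂
  constructor
  · intro h
    -- transfer lemmas
    have hA : ∀ s ∈ S₁, δ + s ∈ S₂ := by
      intro s hs
      have : γ₁ + s ∈ (fun x => γ₂ + x) '' S₂ := h ▸ ⟨s, hs, rfl⟩
      obtain ⟨t, ht, hts⟩ := this
      have : t = δ + s := by apply add_left_cancel (a := γ₂); simp only at hts; rw [hts, hδ]; abel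
      exact this ▸ ht
    have hB : ∀ t ∈ S₂, -δ + t ∈ S₁ := by
      intro t ht
      have : γ₂ + t ∈ (fun x => γ₁ + x) '' S₁ := h.symm ▸ ⟨t, ht, rfl⟩
      obtain ⟨s, hs, hst⟩ := this
      have : s = -δ + t := by apply add_left_cancel (a := γ₁); simp only at hst; rw [hst, hδ]; abel
      exact this ▸ hs
    have hδ2 : δ ∈ S₂ := by simpa using hA 0 h01
    have hnδ1 : -δ ∈ S₁ := by simpa using hB 0 h02
    have hδ1 : δ ∈ S₁ := by
      have := hB _ (OmegaI_add_mem hδ2 hδ2)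
      simpa using this
    have hnδ2 : -δ ∈ S₂ := by
      have := hA _ (OmegaI_add_mem hnδ1 hnδ1)
      simpa [add_comm] using this
    have hSS : S₁ = S₂ := by
      apply Set.Subset.antisymm
      · intro s hs
        have := OmegaI_add_mem hnδ2 (hA s hs)
        simpa using this
      · intro t ht
        have := OmegaI_add_mem hδ1 (hB t ht)
        simpa using this
    exact ⟨hSS, hδ1, by simpa using hnδ1⟩
  · rintro ⟨hSS, hδ1, hnδ1⟩
    rw [Set.mem_neg] at hnδ1
    ext x
    constructor
    · rintro ⟨s, hs, rfl⟩
      refine ⟨δ + s, ?_, by simp [hδ]; abel⟩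
      rw [← hSS]
      exact OmegaI_add_mem hδ1 hs
    · rintro ⟨t, ht, rfl⟩
      rw [← hSS] at ht
      exact ⟨-δ + t, OmegaI_add_mem hnδ1 ht, by simp [hδ]; abel⟩
end

section
/- Let Γ be a locally compact abelian group, ω ∈ Γⁿ, and X an ω-invariant set of the form X = γ + Ω_𝕀. Then Ω_𝕀 = {γ' ∈ Γ : X + γ' ⊆ X}. -/
theorem stmt12 {Γ : Type*} [TopologicalSpace Γ] [AddCommGroup Γ] [IsTopologicalAddGroup Γ]
    [LocallyCompactSpace Γ] {n : ℕ} (ω : Fin n → Γ) (γ : Γ)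
    (I : Set (Fin n)) (hI : I.Nonempty) :
    OmegaI ω I =
      {γ' : Γ | (fun x => x + γ') '' ((fun x => γ + x) '' OmegaI ω I) ⊆
        (fun x => γ + x) '' OmegaI ω I} := by
  set S := AddSubsemigroup.closure (Set.range ω ∪ (fun i => -ω i) '' I) with hS
  have hadd : ∀ a b : Γ, a ∈ OmegaI ω I → b ∈ OmegaI ω I → a + b ∈ OmegaI ω I := by
    intro a b ha hb
    have ha' : a ∈ S.topologicalClosure := ha
    have hb' : b ∈ S.topologicalClosure := hb
    exact add_mem ha' hb'
  obtain ⟨i, hi⟩ := hI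
  have hωi : ω i ∈ OmegaI ω I :=
    subset_closure (AddSubsemigroup.subset_closure (Or.inl ⟨i, rfl⟩))
  have hnωi : -ω i ∈ OmegaI ω I :=
    subset_closure (AddSubsemigroup.subset_closure (Or.inr ⟨i, hi, rfl⟩))
  have h0 : (0 : Γ) ∈ OmegaI ω I := by
    have := hadd _ _ hωi hnωi
    simpa using this
  ext γ'
  constructor
  · intro hγ' z hz
    obtain ⟨_, ⟨x, hx, rfl⟩, rfl⟩ := hz
    exact ⟨x + γ', hadd _ _ hx hγ', (add_assoc γ x γ').symm⟩
  · intro h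
    have : (γ + 0) + γ' ∈ (fun x => γ + x) '' OmegaI ω I :=
      h ⟨γ + 0, ⟨0, h0, rfl⟩, rfl⟩
    obtain ⟨y, hy, hyeq⟩ := this
    have hy2 : y = γ' := by
      have h2 : γ + y = γ + γ' := by simpa [add_zero] using hyeq
      exact add_left_cancel h2
    rw [← hy2]; exact hy
end

section
/- Let Γ be a locally compact abelian group and ω ∈ Γⁿ with n ≥ 2 such that: ω₁ has finite order K, and -ωⱼ ∉ Ω_{1} for all j ≠ 1, where Ω_{1} is the closure of the semigroup generated by ω₁,...,ωₙ, -ω₁. Then for any γ ∈ Γ, any non-empty 𝕀 ⊆ {1,...,n} with 𝕀 ≠ {1}, and any compact set X ⊆ Γ, we have X + Ω ⊉ γ + Ω_𝕀, where Ω is the semigroup generated by ω₁,...,ωₙ (with 0). -/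
open Pointwise Topology Filter

private lemma sum_nsmul_mem_closure' {Γ : Type*} [AddCommMonoid Γ] {n : ℕ} (ω : Fin n → Γ)
    (a : Fin n → ℕ) : ∑ i, a i • ω i ∈ AddSubmonoid.closure (Set.range ω) :=
  AddSubmonoid.sum_mem _ fun i _ =>
    nsmul_mem (AddSubmonoid.subset_closure (Set.mem_range_self i)) (a i)

private lemma exists_repr' {Γ : Type*} [AddCommGroup Γ] {n : ℕ} {ω : Fin n → Γ} {x : Γ}
    (hx : x ∈ AddSubmonoid.closure (Set.range ω)) : ∃ a : Fin n → ℕ, ∑ i, a i • ω i = x := by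
  rw [← Submodule.span_nat_eq_addSubmonoidClosure, Submodule.mem_toAddSubmonoid] at hx
  exact (Submodule.mem_span_range_iff_exists_fun ℕ).mp hx

theorem stmt14 {Γ : Type*} [TopologicalSpace Γ] [AddCommGroup Γ] [IsTopologicalAddGroup Γ]
    [LocallyCompactSpace Γ] [SecondCountableTopology Γ] {n : ℕ} (hn : 2 ≤ n)
    (ω : Fin n → Γ) (K : ℕ) (hK : 0 < K) (hord : K • ω ⟨0, by omega⟩ = 0)
    (hns : ∀ j : Fin n, j ≠ ⟨0, by omega⟩ → -ω j ∉ OmegaI ω {⟨0, by omega⟩}) :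
    ∀ γ : Γ, ∀ I : Set (Fin n), I.Nonempty → I ≠ {⟨0, by omega⟩} →
      ∀ X : Set Γ, IsCompact X →
        ¬ ((fun x => γ + x) '' OmegaI ω I ⊆
            X + (AddSubmonoid.closure (Set.range ω) : Set Γ)) := by
  intro γ I hIne hI X hX hsub
  obtain ⟨j, hjI, hj0⟩ : ∃ j ∈ I, j ≠ (⟨0, by omega⟩ : Fin n) := by
    by_contra h
    push_neg at h
    exact hI (Set.eq_singleton_iff_nonempty_unique_mem.mpr ⟨hIne, h⟩)
  set g : Γ := ω j with hgdef
  set Ωm : AddSubmonoid Γ := AddSubmonoid.closure (Set.range ω) with hΩm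
  set Sm : AddSubmonoid Γ := Ωm.topologicalClosure with hSm
  have hS_closed : IsClosed (Sm : Set Γ) := isClosed_closure
  have hΩS : (Ωm : Set Γ) ⊆ (Sm : Set Γ) := subset_closure
  have hgΩ : g ∈ Ωm := AddSubmonoid.subset_closure ⟨j, rfl⟩
  have hgS : g ∈ Sm := hΩS hgΩ
  -- Step A : the elements γ - (m+1)•g are covered
  have stepA : ∀ m : ℕ, ∃ x ∈ X, γ - x - (m + 1) • g ∈ Ωm := by
    intro m
    have hgen : -g ∈ (Set.range ω ∪ (fun i => -ω i) '' I) := Or.inr ⟨j, hjI, rfl⟩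
    have hmem : (m + 1) • (-g) ∈
        AddSubsemigroup.closure (Set.range ω ∪ (fun i => -ω i) '' I) := by
      induction m with
      | zero => simpa using AddSubsemigroup.subset_closure hgen
      | succ k ih =>
          rw [succ_nsmul]
          exact AddSubsemigroup.add_mem _ ih (AddSubsemigroup.subset_closure hgen)
    have hmem2 : γ + (m + 1) • (-g) ∈ (fun x => γ + x) '' OmegaI ω I :=
      ⟨(m + 1) • (-g), subset_closure hmem, rfl⟩
    obtain ⟨x, hx, y, hy, hxy⟩ := Set.mem_add.mp (hsub hmem2)
    refine ⟨x, hx, ?_⟩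
    have hne : (m + 1) • (-g) = -((m + 1) • g) := smul_neg _ _
    rw [hne] at hxy
    have hγ : γ = x + y + (m + 1) • g := by rw [hxy]; abel
    have heq : γ - x - (m + 1) • g = y := by rw [hγ]; abel
    rw [heq]; exact hy
  -- Step B : compactness gives c with c - (m+1)•g ∈ Sm for all m
  set F : ℕ → Set Γ := fun m => {y | y - (m + 1) • g ∈ (Sm : Set Γ)} with hF
  have hFclosed : ∀ m, IsClosed (F m) :=
    fun m => hS_closed.preimage (continuous_id.sub continuous_const)
  have hFanti : Antitone F := by
    apply antitone_nat_of_succ_le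
    intro m y hy
    have h1 : y - (m + 1 + 1) • g + g ∈ Sm := Sm.add_mem hy hgS
    have h2 : y - (m + 1 + 1) • g + g = y - (m + 1) • g := by
      rw [succ_nsmul]; abel
    rwa [h2] at h1
  have hKcpt : IsCompact ((fun x => γ - x) '' X) :=
    hX.image (continuous_const.sub continuous_id)
  have hmain : (((fun x => γ - x) '' X) ∩ ⋂ m, F m).Nonempty := by
    apply hKcpt.inter_iInter_nonempty F hFclosed
    intro u
    obtain ⟨x, hx, hy⟩ := stepA (u.sup id)
    refine ⟨γ - x, ⟨x, hx, rfl⟩, ?_⟩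
    have hmem : γ - x ∈ F (u.sup id) := hΩS hy
    exact Set.mem_biInter fun i hi => hFanti (Finset.le_sup (f := id) hi) hmem
  obtain ⟨c, hcX, hcF⟩ := hmain
  rw [Set.mem_iInter] at hcF
  have hcF' : ∀ m : ℕ, c - (m + 1) • g ∈ (Sm : Set Γ) := fun m => hcF m
  -- Step C : choose approximants in Ωm with large j-coefficient
  obtain ⟨V, hV⟩ := (𝓝 (0 : Γ)).exists_antitone_basis
  have hchoice : ∀ N : ℕ, ∃ w, w ∈ Ωm ∧ w - c ∈ V N ∧
      ∃ a : Fin n → ℕ, (∑ i, a i • ω i = w) ∧ N + 1 ≤ a j := by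
    intro N
    have hc : c - (N + 1) • g ∈ closure (Ωm : Set Γ) := hcF' N
    rw [mem_closure_iff_nhds] at hc
    have hnhds : (fun v => (c - (N + 1) • g) + v) '' V N ∈ 𝓝 (c - (N + 1) • g) := by
      rw [← map_add_left_nhds_zero (c - (N + 1) • g)]
      exact Filter.image_mem_map (hV.toHasBasis.mem_of_mem trivial)
    obtain ⟨u, ⟨v, hvV, hvu⟩, huΩ⟩ := hc _ hnhds
    obtain ⟨b, hb⟩ := exists_repr' huΩ
    refine ⟨u + (N + 1) • g, Ωm.add_mem huΩ (nsmul_mem hgΩ (N + 1)), ?_, ?_⟩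
    · have hvu' : c - (N + 1) • g + v = u := hvu
      have : u + (N + 1) • g - c = v := by rw [← hvu']; abel
      rw [this]; exact hvV
    · refine ⟨fun i => b i + (if i = j then N + 1 else 0), ?_, by simp⟩
      have h1 : ∀ i : Fin n, (b i + (if i = j then N + 1 else 0)) • ω i
          = b i • ω i + (if i = j then (N + 1) • ω i else 0) := by
        intro i
        by_cases h : i = j <;> simp [h, add_smul]
      rw [Finset.sum_congr rfl fun i _ => h1 i, Finset.sum_add_distrib, hb,
        Finset.sum_ite_eq' Finset.univ j (fun i => (N + 1) • ω i)]
      simp [hgdef]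
  choose w hwΩ hwc hrep using hchoice
  choose a ha haj using hrep
  -- Step D : Dickson's lemma, coefficient-monotone subsequence
  have hPWO : (Set.univ : Set (Fin n → ℕ)).IsPWO :=
    Set.isPWO_of_wellQuasiOrderedLE _
  obtain ⟨φ, hφ⟩ := hPWO.exists_monotone_subseq (f := a) (fun _ => Set.mem_univ _)
  -- Step E : c - w (φ k) ∈ (N+1)•g + Sm for all N
  have stepE : ∀ k N : ℕ, c - w (φ k) - (N + 1) • g ∈ (Sm : Set Γ) := by
    intro k N
    show c - w (φ k) - (N + 1) • g ∈ closure (Ωm : Set Γ)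
    rw [mem_closure_iff_nhds]
    intro t ht
    set z := c - w (φ k) - (N + 1) • g with hz
    have hpre : (fun v => z + v) ⁻¹' t ∈ 𝓝 (0 : Γ) := by
      rw [← map_add_left_nhds_zero z] at ht
      exact ht
    obtain ⟨M, -, hM⟩ := hV.toHasBasis.mem_iff.mp hpre
    set l := max (max k M) (N + 1 + a (φ k) j) with hl
    have hkl : k ≤ l := le_trans (le_max_left _ _) (le_max_left _ _)
    have hMl : M ≤ l := le_trans (le_max_right _ _) (le_max_left _ _)
    have haψ : ∀ i, a (φ k) i ≤ a (φ l) i := fun i => hφ hkl i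
    have hφl : l ≤ φ l := φ.strictMono.le_apply
    have hajl : a (φ k) j + (N + 1) ≤ a (φ l) j := by
      have h1 := haj (φ l)
      have h2 : N + 1 + a (φ k) j ≤ l := le_max_right _ _
      omega
    set d : Fin n → ℕ := fun i => a (φ l) i - a (φ k) i - (if i = j then N + 1 else 0)
      with hd
    have key : ∀ i, d i + (a (φ k) i + (if i = j then N + 1 else 0)) = a (φ l) i := by
      intro i
      have h3 := haψ i
      by_cases h : i = j
      · subst h; simp [hd]; omega
      · simp [hd, if_neg h]; omega
    have hsum : ∑ i, d i • ω i = w (φ l) - w (φ k) - (N + 1) • g := by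
      have h4 : ∑ i, d i • ω i +
          (∑ i, a (φ k) i • ω i + ∑ i, (if i = j then N + 1 else 0) • ω i)
          = ∑ i, a (φ l) i • ω i := by
        rw [← Finset.sum_add_distrib, ← Finset.sum_add_distrib]
        exact Finset.sum_congr rfl fun i _ => by rw [← add_smul, ← add_smul, key i]
      have h5 : ∀ i : Fin n, (if i = j then N + 1 else 0) • ω i
          = (if i = j then (N + 1) • ω i else 0) := by
        intro i; by_cases h : i = j <;> simp [h]
      rw [Finset.sum_congr rfl fun i _ => h5 i,
        Finset.sum_ite_eq' Finset.univ j (fun i => (N + 1) • ω i)] at h4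
      simp only [Finset.mem_univ, if_true] at h4
      rw [ha (φ k), ha (φ l), ← hgdef] at h4
      rw [← h4]; abel
    have hmemΩ : w (φ l) - w (φ k) - (N + 1) • g ∈ (Ωm : Set Γ) :=
      hsum ▸ sum_nsmul_mem_closure' ω d
    refine ⟨w (φ l) - w (φ k) - (N + 1) • g, ?_, hmemΩ⟩
    have hWl : w (φ l) - c ∈ V M := hV.antitone (hMl.trans hφl) (hwc (φ l))
    have heq : w (φ l) - w (φ k) - (N + 1) • g = z + (w (φ l) - c) := by
      rw [hz]; abel
    rw [heq]
    exact hM hWl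
  -- Step F : 0 ∈ A, hence -g ∈ Sm
  set A : Set Γ := ⋂ N : ℕ, {y | y - (N + 1) • g ∈ (Sm : Set Γ)} with hA
  have hAclosed : IsClosed A :=
    isClosed_iInter fun N => hS_closed.preimage (continuous_id.sub continuous_const)
  have hckA : ∀ k, c - w (φ k) ∈ A := fun k => Set.mem_iInter.mpr fun N => stepE k N
  have h0A : (0 : Γ) ∈ A := by
    rw [← hAclosed.closure_eq, mem_closure_iff_nhds]
    intro t ht
    have hneg : (fun y : Γ => -y) ⁻¹' t ∈ 𝓝 (0 : Γ) := by
      have : Filter.Tendsto (fun y : Γ => -y) (𝓝 0) (𝓝 0) := by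
        simpa using (continuous_neg (G := Γ)).tendsto (0 : Γ)
      exact this ht
    obtain ⟨M, -, hM⟩ := hV.toHasBasis.mem_iff.mp hneg
    refine ⟨c - w (φ M), ?_, hckA M⟩
    have h1 : w (φ M) - c ∈ V M := hV.antitone φ.strictMono.le_apply (hwc (φ M))
    have h2 := hM h1
    simpa [neg_sub] using h2
  have hgSneg : -g ∈ (Sm : Set Γ) := by
    have h := Set.mem_iInter.mp h0A 0
    simpa using h
  -- Step G : Sm ⊆ OmegaI ω {0}, contradiction
  have hsubset : (Sm : Set Γ) ⊆ OmegaI ω {(⟨0, by omega⟩ : Fin n)} := by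
    apply closure_mono
    intro x hx
    induction hx using AddSubmonoid.closure_induction with
    | mem y hy => exact AddSubsemigroup.subset_closure (Or.inl hy)
    | zero =>
        have h0 : ω (⟨0, by omega⟩ : Fin n) + -ω (⟨0, by omega⟩ : Fin n) = 0 :=
          add_neg_cancel _
        rw [← h0]
        exact AddSubsemigroup.add_mem _
          (AddSubsemigroup.subset_closure (Or.inl ⟨_, rfl⟩))
          (AddSubsemigroup.subset_closure (Or.inr ⟨_, rfl, rfl⟩))
    | add y z _ _ hy hz => exact AddSubsemigroup.add_mem _ hy hz
  exact hns j hj0 (hsubset hgSneg)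
end

section
/- Let Γ be a locally compact abelian group and ω ∈ Γⁿ. An ω-invariant set X is good (not bad) if and only if for every γ ∈ X one of the following holds: (i) there exists i such that γ - m·ωᵢ ∈ X and γ - m·ωᵢ ≠ γ for every positive integer m; or (ii) there exist i ≠ j such that γ - m·ωᵢ - ωⱼ ∈ X for every positive integer m. -/
/-- `X` is bad: there is `γ ∈ X` such that there is exactly one `i` with `γ - ωᵢ ∈ X`,
and this `i` satisfies `m • ωᵢ = 0` for some positive integer `m`. -/
def IsBad {Γ : Type*} [TopologicalSpace Γ] [AddCommGroup Γ] {n : ℕ}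
    (ω : Fin n → Γ) (X : Set Γ) : Prop :=
  ∃ γ ∈ X, ∃ i : Fin n, γ - ω i ∈ X ∧ (∀ j : Fin n, γ - ω j ∈ X → j = i) ∧
    ∃ m : ℕ, 0 < m ∧ m • ω i = 0

lemma aux_fwd {Γ : Type*} [AddCommGroup Γ] {n : ℕ}
    (ω : Fin n → Γ) (X : Set Γ) (hC : ∀ γ ∈ X, ∀ i, γ + ω i ∈ X) :
    ∀ δ ∈ X, ∀ (j : Fin n) (s : ℕ), δ + s • ω j ∈ X := by
  intro δ hδ j s
  induction s with
  | zero => simpa using hδ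
  | succ s ih =>
      have h2 := hC _ ih j
      rw [succ_nsmul, ← add_assoc]
      exact h2

lemma aux_key {Γ : Type*} [AddCommGroup Γ] {n : ℕ}
    (ω : Fin n → Γ) (X : Set Γ)
    (hC : ∀ γ ∈ X, ∀ i, γ + ω i ∈ X) (hD : ∀ γ ∈ X, ∃ i, γ - ω i ∈ X)
    (γ : Γ) (hγ : γ ∈ X) : ∃ i, ∀ m : ℕ, γ - m • ω i ∈ X := by
  choose F hF using fun δ : X => hD δ δ.2
  let g : ℕ → X := fun k => Nat.rec ⟨γ, hγ⟩ (fun _ p => ⟨(p : Γ) - ω (F p), hF p⟩) k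
  let f : ℕ → Fin n := fun k => F (g k)
  have hg : ∀ k, (g (k+1)).1 = (g k).1 - ω (f k) := fun _ => rfl
  have hgval : ∀ k, (g k).1 = γ - ∑ t ∈ Finset.range k, ω (f t) := by
    intro k
    induction k with
    | zero => simp [g]
    | succ k ih => rw [hg, ih, Finset.sum_range_succ]; abel
  have hsum : ∀ δ ∈ X, ∀ s : Finset ℕ, δ + ∑ t ∈ s, ω (f t) ∈ X := by
    intro δ hδ s
    induction s using Finset.induction with
    | empty => simpa
    | @insert a s ha ih =>
        have h2 := hC _ ih (f a)
        have heq : δ + ∑ t ∈ insert a s, ω (f t)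
            = (δ + ∑ t ∈ s, ω (f t)) + ω (f a) := by
          rw [Finset.sum_insert ha]; abel
        rw [heq]; exact h2
  set c : Fin n → ℕ → ℕ :=
    fun i k => ((Finset.range k).filter (fun t => f t = i)).card with hc
  have hcX : ∀ (i : Fin n) (k : ℕ), γ - (c i k) • ω i ∈ X := by
    intro i k
    have h1 : ∑ t ∈ Finset.range k, ω (f t)
        = (∑ t ∈ (Finset.range k).filter (fun t => f t = i), ω (f t))
          + ∑ t ∈ (Finset.range k).filter (fun t => ¬ f t = i), ω (f t) :=
      (Finset.sum_filter_add_sum_filter_not _ _ _).symm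
    have h2 : ∑ t ∈ (Finset.range k).filter (fun t => f t = i), ω (f t)
        = (c i k) • ω i := by
      rw [Finset.sum_congr rfl (fun t ht => by rw [(Finset.mem_filter.mp ht).2]),
        Finset.sum_const]
    have hsplit : γ - (c i k) • ω i
        = (g k).1 + ∑ t ∈ (Finset.range k).filter (fun t => ¬ f t = i), ω (f t) := by
      rw [hgval, h1, h2]; abel
    rw [hsplit]
    exact hsum _ (g k).2 _
  have hcsum : ∀ k, ∑ i, c i k = k := by
    intro k
    have h := Finset.card_eq_sum_card_fiberwise
      (s := Finset.range k) (t := Finset.univ) (f := f) (fun x _ => Finset.mem_univ _)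
    simpa [hc] using h.symm
  by_contra hcon
  push_neg at hcon
  choose M hM using hcon
  have hlt : ∀ i k, c i k < M i := by
    intro i k
    by_contra hle
    push_neg at hle
    obtain ⟨d, hd⟩ := Nat.exists_eq_add_of_le hle
    apply hM i
    have h3 := aux_fwd ω X hC _ (hcX i k) i d
    have heq : γ - (c i k) • ω i + d • ω i = γ - (M i) • ω i := by
      rw [hd, add_nsmul]; abel
    rwa [heq] at h3
  have hbound : ∀ k, k ≤ ∑ i, M i := by
    intro k
    calc k = ∑ i, c i k := (hcsum k).symm
    _ ≤ ∑ i, M i := Finset.sum_le_sum (fun i _ => (hlt i k).le)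
  have := hbound (∑ i, M i + 1)
  omega

theorem stmt16 {Γ : Type*} [TopologicalSpace Γ] [AddCommGroup Γ] [IsTopologicalAddGroup Γ]
    [LocallyCompactSpace Γ] {n : ℕ} (ω : Fin n → Γ) (X : Set Γ)
    (hX : IsOmegaInvariant ω X) :
    ¬ IsBad ω X ↔
      ∀ γ ∈ X,
        (∃ i : Fin n, ∀ m : ℕ, 0 < m → γ - m • ω i ∈ X ∧ γ - m • ω i ≠ γ) ∨
        (∃ i j : Fin n, i ≠ j ∧ ∀ m : ℕ, 0 < m → γ - m • ω i - ω j ∈ X) := by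
  obtain ⟨-, hC, hD⟩ := hX
  constructor
  · intro hnb γ hγ
    obtain ⟨i, hi⟩ := aux_key ω X hC hD γ hγ
    by_cases htor : ∃ m : ℕ, 0 < m ∧ m • ω i = 0
    · obtain ⟨m₀, hm₀, hω⟩ := htor
      have hδX : γ - (m₀ - 1) • ω i ∈ X := hi _
      have hδi : γ - (m₀ - 1) • ω i - ω i ∈ X := by
        have heq : γ - (m₀ - 1) • ω i - ω i = γ - m₀ • ω i := by
          have h1 : (m₀ - 1) + 1 = m₀ := by omega
          conv_rhs => rw [← h1]
          rw [add_nsmul, one_nsmul]; abel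
        rw [heq]; exact hi _
      have hj : ∃ j, (γ - (m₀ - 1) • ω i) - ω j ∈ X ∧ j ≠ i := by
        by_contra hcon
        push_neg at hcon
        exact hnb ⟨_, hδX, i, hδi, hcon, m₀, hm₀, hω⟩
      obtain ⟨j, hjX, hji⟩ := hj
      right
      refine ⟨i, j, hji.symm, fun m hm => ?_⟩
      have hmod : m • ω i = (m % m₀) • ω i := by
        conv_lhs => rw [← Nat.div_add_mod m m₀]
        rw [add_nsmul, mul_nsmul, hω, smul_zero, zero_add]
      have hrle : m % m₀ ≤ m₀ - 1 := by
        have := Nat.mod_lt m hm₀; omega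
      obtain ⟨d, hd⟩ := Nat.exists_eq_add_of_le hrle
      have hfw := aux_fwd ω X hC _ hjX i d
      have heq : (γ - (m₀ - 1) • ω i - ω j) + d • ω i
          = γ - (m % m₀) • ω i - ω j := by
        rw [hd, add_nsmul]; abel
      rw [heq] at hfw
      rw [hmod]
      exact hfw
    · push_neg at htor
      left
      refine ⟨i, fun m hm => ⟨hi m, fun heq => ?_⟩⟩
      exact htor m hm (sub_eq_self.mp heq)
  · rintro hrhs ⟨γ, hγ, i, hiX, huniq, m, hm, hω⟩
    rcases hrhs γ hγ with ⟨i', hi'⟩ | ⟨i', j, hij, hij'⟩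
    · obtain ⟨h1, -⟩ := hi' 1 one_pos
      rw [one_nsmul] at h1
      have hii : i' = i := huniq i' h1
      subst hii
      obtain ⟨-, hne⟩ := hi' m hm
      rw [hω] at hne
      simp at hne
    · have h1 := hij' 1 one_pos
      rw [one_nsmul] at h1
      have h1' : γ - ω i' ∈ X := by
        have h2 := hC _ h1 j
        simpa [sub_add_cancel] using h2
      have hii : i' = i := huniq i' h1'
      subst hii
      have hm' := hij' m hm
      rw [hω] at hm'
      have h3 : γ - ω j ∈ X := by simpa using hm'
      exact hij (huniq j h3).symm
end

section
/- Let Γ be a locally compact abelian group and ω ∈ Γⁿ. Suppose ω satisfies Condition (*): for each i ∈ {1,...,n}, either k·ωᵢ ≠ 0 for all positive integers k, or there exists j ≠ i with -ωⱼ ∈ Ω_{i}. Then every ω-invariant subset of Γ is good. -/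
theorem stmt17 {Γ : Type*} [TopologicalSpace Γ] [AddCommGroup Γ] [IsTopologicalAddGroup Γ]
    [LocallyCompactSpace Γ] {n : ℕ} (ω : Fin n → Γ)
    (hcond : ∀ i : Fin n,
      (∀ k : ℕ, 0 < k → k • ω i ≠ 0) ∨ ∃ j : Fin n, j ≠ i ∧ -ω j ∈ OmegaI ω {i}) :
    ∀ X : Set Γ, IsOmegaInvariant ω X → ¬ IsBad ω X := by
  rintro X ⟨hXcl, hXfwd, -⟩ ⟨γ, hγ, i, hγi, huniq, m, hm, hmi⟩
  rcases hcond i with h | ⟨j, hji, hj⟩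
  · exact h m hm hmi
  -- X is stable under adding k • ω i
  have hsmul : ∀ x ∈ X, ∀ k : ℕ, x + k • ω i ∈ X := by
    intro x hx k
    induction k with
    | zero => simpa using hx
    | succ k ih => rw [succ_nsmul, ← add_assoc]; exact hXfwd _ ih i
  -- X is stable under adding -ω i
  have hneg : ∀ x ∈ X, x + (-ω i) ∈ X := by
    intro x hx
    have he : (m - 1) • ω i = -ω i := by
      have h0 : (m - 1) • ω i + ω i = 0 := by
        rw [← succ_nsmul, Nat.sub_add_cancel hm]; exact hmi
      exact eq_neg_of_add_eq_zero_left h0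
    rw [← he]; exact hsmul x hx (m - 1)
  -- X is stable under adding any element of the semigroup
  have hsemi : ∀ s ∈ AddSubsemigroup.closure
      (Set.range ω ∪ (fun i => -ω i) '' ({i} : Set (Fin n))), ∀ x ∈ X, x + s ∈ X := by
    intro s hs
    induction hs using AddSubsemigroup.closure_induction with
    | mem t ht =>
      intro x hx
      rcases ht with ⟨k, rfl⟩ | ⟨k, hk, rfl⟩
      · exact hXfwd _ hx k
      · rcases hk with rfl
        exact hneg x hx
    | add a b _ _ ha hb =>
      intro x hx
      rw [← add_assoc]
      exact hb _ (ha _ hx)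
  -- extend to the closure
  have hmem : ∀ s ∈ OmegaI ω ({i} : Set (Fin n)), γ - ω i + s ∈ X := by
    intro s hs
    have hsub : (OmegaI ω ({i} : Set (Fin n))) ⊆ (fun t => γ - ω i + t) ⁻¹' X :=
      closure_minimal (fun t ht => hsemi t ht _ hγi)
        (hXcl.preimage (continuous_const.add continuous_id))
    exact hsub hs
  have h1 : γ - ω i + (-ω j) ∈ X := hmem _ hj
  have h2 : γ - ω j ∈ X := by
    have := hXfwd _ h1 i
    have he : γ - ω i + (-ω j) + ω i = γ - ω j := by abel
    rwa [he] at this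
  exact hji (huniq j h2)
end

section
/- Let ω = (ω₁,...,ωₙ) ∈ ℝⁿ. Define ω to be of type (+) if all ωᵢ have the same (strict) sign, type (-) if there exist i, j with ωᵢ < 0 < ωⱼ, and type (0) otherwise. Then for ω of type (+) or type (-), the closure Ω_{i} of the semigroup generated by ω₁,...,ωₙ, -ωᵢ equals the closed subgroup of ℝ generated by ω₁,...,ωₙ, for every i ∈ {1,...,n}. -/
/-- `ω` is of type (+): all the `ωᵢ` have the same strict sign. -/
def TypePlus {n : ℕ} (ω : Fin n → ℝ) : Prop :=
  (∀ i, 0 < ω i) ∨ (∀ i, ω i < 0)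

/-- `ω` is of type (-): there are `i, j` with `ωᵢ < 0 < ωⱼ`. -/
def TypeMinus {n : ℕ} (ω : Fin n → ℝ) : Prop :=
  ∃ i j, ω i < 0 ∧ 0 < ω j

theorem AddSubsemigroup.nsmul_mem {M : Type*} [AddMonoid M] (S : AddSubsemigroup M) {x : M}
    (hx : x ∈ S) {k : ℕ} (hk : 0 < k) : k • x ∈ S := by
  induction k, hk using Nat.le_induction with
  | base => simpa using hx
  | succ k _ ih => simpa [succ_nsmul] using S.add_mem ih hx

theorem Real.exists_pos_nat_abs_mul_add_mul_lt {a b ε : ℝ} (ha : 0 < a) (hb : b < 0)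
    (hε : 0 < ε) : ∃ p m : ℕ, 0 < p ∧ 0 < m ∧ |p * a + m * b| < ε := by
  obtain ⟨N, hN⟩ := exists_nat_gt (-b / min ε a)
  obtain ⟨p, hp, -, hdir⟩ :=
    Real.exists_nat_abs_mul_sub_round_le (a / -b) N.succ_pos
  set j := round ((p : ℝ) * (a / -b))
  have hb' : 0 < -b := neg_pos.2 hb
  -- Staying below `a` (not just `ε`) is what forces the integer `j` to be positive.
  have hclose : |p * a + j * b| < min ε a := by
    have hmin : 0 < min ε a := lt_min hε ha
    have hrescale : p * a + j * b = -b * (p * (a / -b) - j) := by field_simp [hb.ne]; ring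
    rw [div_lt_iff₀ hmin] at hN
    calc |p * a + j * b| = -b * |p * (a / -b) - j| := by
          rw [hrescale, abs_mul, abs_of_pos hb']
      _ ≤ -b * (1 / (N.succ + 1)) := by gcongr
      _ < min ε a := by
          rw [mul_one_div, div_lt_iff₀ (by positivity)]
          push_cast
          nlinarith
  have hj : 0 < j := by
    have hp1 : (1 : ℝ) ≤ p := by exact_mod_cast hp
    have := (abs_lt.1 (hclose.trans_le (min_le_right ε a))).2
    have : (0 : ℝ) < j := by nlinarith
    exact_mod_cast this
  lift j to ℕ using hj.le with m
  exact ⟨p, m, hp, by exact_mod_cast hj, hclose.trans_le (min_le_left ε a)⟩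

namespace AddSubsemigroup

variable {S : AddSubsemigroup ℝ} {a b : ℝ}

theorem mem_of_isClosed_of_forall_add_nsmul_add_nsmul_mem (hS : IsClosed (S : Set ℝ))
    (ha : 0 < a) (hb : b < 0) {x : ℝ}
    (hx : ∀ p m : ℕ, 0 < p → 0 < m → x + (p • a + m • b) ∈ S) : x ∈ S := by
  refine hS.closure_subset (Metric.mem_closure_iff.2 fun ε hε => ?_)
  obtain ⟨p, m, hp, hm, hpm⟩ := Real.exists_pos_nat_abs_mul_add_mul_lt ha hb hε
  exact ⟨_, hx p m hp hm, by simpa [nsmul_eq_mul] using hpm⟩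

theorem zero_mem_of_isClosed (hS : IsClosed (S : Set ℝ)) (ha : 0 < a) (hb : b < 0)
    (haS : a ∈ S) (hbS : b ∈ S) : (0 : ℝ) ∈ S :=
  mem_of_isClosed_of_forall_add_nsmul_add_nsmul_mem hS ha hb fun _ _ hp hm => by
    simpa using S.add_mem (S.nsmul_mem haS hp) (S.nsmul_mem hbS hm)

theorem neg_mem_and_neg_mem_of_isClosed (hS : IsClosed (S : Set ℝ)) (ha : 0 < a) (hb : b < 0)
    (haS : a ∈ S) (hbS : b ∈ S) : -a ∈ S ∧ -b ∈ S := by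
  let M : AddSubmonoid ℝ := { S with zero_mem' := zero_mem_of_isClosed hS ha hb haS hbS }
  have hcombination (p m : ℕ) : p • a + m • b ∈ S :=
    M.add_mem (M.nsmul_mem haS p) (M.nsmul_mem hbS m)
  constructor <;> refine mem_of_isClosed_of_forall_add_nsmul_add_nsmul_mem hS ha hb
    fun p m hp hm => ?_
  · obtain ⟨p, rfl⟩ := Nat.exists_eq_add_one_of_ne_zero hp.ne'
    convert hcombination p m using 1
    rw [succ_nsmul]; abel
  · obtain ⟨m, rfl⟩ := Nat.exists_eq_add_one_of_ne_zero hm.ne'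
    convert hcombination p m using 1
    rw [succ_nsmul]; abel

theorem neg_mem_of_isClosed (hS : IsClosed (S : Set ℝ)) (ha : 0 < a) (hb : b < 0)
    (haS : a ∈ S) (hbS : b ∈ S) {x : ℝ} (hx : x ∈ S) : -x ∈ S := by
  rcases lt_trichotomy x 0 with hneg | rfl | hpos
  · exact (neg_mem_and_neg_mem_of_isClosed hS ha hneg haS hx).2
  · simpa using zero_mem_of_isClosed hS ha hb haS hbS
  · exact (neg_mem_and_neg_mem_of_isClosed hS hpos hb hx hbS).1

theorem exists_addSubgroup_coe_eq_of_isClosed (hS : IsClosed (S : Set ℝ)) (ha : 0 < a)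
    (hb : b < 0) (haS : a ∈ S) (hbS : b ∈ S) : ∃ G : AddSubgroup ℝ, (G : Set ℝ) = S :=
  ⟨{ carrier := S
     add_mem' := S.add_mem
     zero_mem' := zero_mem_of_isClosed hS ha hb haS hbS
     neg_mem' := neg_mem_of_isClosed hS ha hb haS hbS }, rfl⟩

end AddSubsemigroup

theorem exists_pos_neg_mem_of_typePlus_or_typeMinus {n : ℕ} {ω : Fin n → ℝ}
    (h : TypePlus ω ∨ TypeMinus ω) (i : Fin n) :
    ∃ a ∈ Set.range ω ∪ (fun i => -ω i) '' {i}, ∃ b ∈ Set.range ω ∪ (fun i => -ω i) '' {i},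
      0 < a ∧ b < 0 := by
  have hω (j : Fin n) : ω j ∈ Set.range ω ∪ (fun i => -ω i) '' {i} := Or.inl ⟨j, rfl⟩
  have hω_neg : -ω i ∈ Set.range ω ∪ (fun i => -ω i) '' {i} := Or.inr ⟨i, rfl, rfl⟩
  rcases h with (hpos | hneg) | ⟨j, k, hj, hk⟩
  · exact ⟨_, hω i, _, hω_neg, hpos i, neg_neg_of_pos (hpos i)⟩
  · exact ⟨_, hω_neg, _, hω i, neg_pos.2 (hneg i), hneg i⟩
  · exact ⟨_, hω k, _, hω j, hk, hj⟩

theorem stmt18_general {n : ℕ} (ω : Fin n → ℝ)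
    (h : TypePlus ω ∨ TypeMinus ω) :
    ∀ i : Fin n, OmegaI ω {i} = closure (AddSubgroup.closure (Set.range ω) : Set ℝ) := by
  intro i
  set S := AddSubsemigroup.closure (Set.range ω ∪ (fun i => -ω i) '' {i})
  obtain ⟨a, ha, b, hb, ha0, hb0⟩ := exists_pos_neg_mem_of_typePlus_or_typeMinus h i
  obtain ⟨G, hG⟩ := S.topologicalClosure.exists_addSubgroup_coe_eq_of_isClosed
    S.isClosed_topologicalClosure ha0 hb0
    (S.le_topologicalClosure (AddSubsemigroup.subset_closure ha))
    (S.le_topologicalClosure (AddSubsemigroup.subset_closure hb))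
  change (G : Set ℝ) = OmegaI ω {i} at hG
  apply subset_antisymm
  · refine closure_mono (AddSubsemigroup.closure_le.2 ?_ :
      S ≤ (AddSubgroup.closure (Set.range ω)).toAddSubmonoid.toAddSubsemigroup)
    rintro _ (hω | ⟨j, rfl, rfl⟩)
    · exact AddSubgroup.subset_closure hω
    · exact (AddSubgroup.closure _).neg_mem (AddSubgroup.subset_closure ⟨j, rfl⟩)
  · have hle : AddSubgroup.closure (Set.range ω) ≤ G := (AddSubgroup.closure_le G).2 <| by
      rw [hG]
      rintro _ ⟨j, rfl⟩
      exact subset_closure (AddSubsemigroup.subset_closure (Or.inl ⟨j, rfl⟩))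
    exact closure_minimal (hG ▸ SetLike.coe_subset_coe.2 hle) isClosed_closure

theorem stmt18 {n : ℕ} (hn : 2 ≤ n) (ω : Fin n → ℝ)
    (h : TypePlus ω ∨ TypeMinus ω) :
    ∀ i : Fin n, OmegaI ω {i} = closure (AddSubgroup.closure (Set.range ω) : Set ℝ) :=
  stmt18_general ω h
end

section
/- Let ω = (ω₁,...,ωₙ) ∈ ℝⁿ be of type (0), i.e., there exists i with ωᵢ = 0 and all other ωⱼ have the same strict sign. Then the semigroup Ω = {ω_μ : μ a finite word over {1,...,n}} (including 0) is a closed subset of ℝ, and a closed set X ⊆ ℝ is ω-invariant if and only if X + Ω ⊆ X. -/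
open Pointwise

lemma memRepIff {n : ℕ} (ω : Fin n → ℝ) (x : ℝ) :
    x ∈ AddSubmonoid.closure (Set.range ω) ↔
      ∃ c : Fin n → ℕ, x = ∑ j, (c j : ℝ) * ω j := by
  constructor
  · intro hx
    induction hx using AddSubmonoid.closure_induction with
    | mem y hy =>
        obtain ⟨j, rfl⟩ := hy
        exact ⟨Pi.single j 1, by simp [Pi.single_apply, ite_mul, Finset.sum_ite_eq']⟩
    | zero => exact ⟨0, by simp⟩
    | add a b ha hb iha ihb =>
        obtain ⟨c, rfl⟩ := iha
        obtain ⟨d, rfl⟩ := ihb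
        exact ⟨c + d, by simp [add_mul, Finset.sum_add_distrib]⟩
  · rintro ⟨c, rfl⟩
    refine AddSubmonoid.sum_mem _ fun j _ => ?_
    rw [← nsmul_eq_mul]
    exact AddSubmonoid.nsmul_mem _ (AddSubmonoid.subset_closure (Set.mem_range_self j)) _

lemma sliceFinite {n : ℕ} (ω : Fin n → ℝ) (m : ℝ) (hm : 0 < m)
    (h : ∀ j, ω j = 0 ∨ m ≤ ω j) (N : ℝ) :
    ((AddSubmonoid.closure (Set.range ω) : Set ℝ) ∩ Set.Iic N).Finite := by
  classical
  set K := ⌈N / m⌉₊ with hK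
  have hfin : (Set.univ.pi fun _ : Fin n => Set.Iic K).Finite :=
    Set.Finite.pi fun _ => Set.finite_Iic K
  apply (hfin.image (fun c : Fin n → ℕ => ∑ j, (c j : ℝ) * ω j)).subset
  rintro x ⟨hx, hxN⟩
  obtain ⟨c, rfl⟩ := (memRepIff ω x).1 hx
  have hnn : ∀ j, 0 ≤ (c j : ℝ) * ω j := by
    intro j
    rcases h j with h0 | hge
    · simp [h0]
    · exact mul_nonneg (Nat.cast_nonneg _) (hm.le.trans hge)
  refine ⟨fun j => if ω j = 0 then 0 else c j, ?_, ?_⟩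
  · intro j _
    simp only [Set.mem_Iic]
    split
    · exact Nat.zero_le _
    · rename_i hj
      have hge : m ≤ ω j := (h j).resolve_left hj
      have hterm : (c j : ℝ) * ω j ≤ N :=
        le_trans (Finset.single_le_sum (fun k _ => hnn k) (Finset.mem_univ j)) hxN
      have h1 : (c j : ℝ) * m ≤ N :=
        le_trans (mul_le_mul_of_nonneg_left hge (Nat.cast_nonneg _)) hterm
      have h2 : (c j : ℝ) ≤ N / m := (le_div_iff₀ hm).2 h1
      have h3 : (c j : ℝ) ≤ (K : ℝ) := h2.trans (Nat.le_ceil _)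
      exact_mod_cast h3
  · refine Finset.sum_congr rfl fun j _ => ?_
    by_cases hj : ω j = 0 <;> simp [hj]

lemma closedOfSlices (S : Set ℝ) (h : ∀ N : ℝ, (S ∩ Set.Iic N).Finite) : IsClosed S := by
  apply isClosed_of_closure_subset
  intro x hx
  have hFc : IsClosed (S ∩ Set.Iic (x + 1)) := (h (x + 1)).isClosed
  have h1 : x ∈ closure (Set.Iio (x + 1) ∩ S) :=
    IsOpen.inter_closure isOpen_Iio ⟨by simp, hx⟩
  have h2 : closure (Set.Iio (x + 1) ∩ S) ⊆ S ∩ Set.Iic (x + 1) := by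
    rw [← hFc.closure_eq]
    exact closure_mono fun y hy => ⟨hy.2, Set.mem_Iic.2 (le_of_lt (Set.mem_Iio.1 hy.1))⟩
  exact (h2 h1).1

theorem stmt19 {n : ℕ} (hn : 2 ≤ n) (ω : Fin n → ℝ)
    (htype : ∃ i : Fin n, ω i = 0 ∧
      ((∀ j, j ≠ i → 0 < ω j) ∨ (∀ j, j ≠ i → ω j < 0))) :
    IsClosed (AddSubmonoid.closure (Set.range ω) : Set ℝ) ∧
      ∀ X : Set ℝ, IsClosed X →
        (((∀ x ∈ X, ∀ j, x + ω j ∈ X) ∧ (∀ x ∈ X, ∃ j, x - ω j ∈ X)) ↔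
          X + (AddSubmonoid.closure (Set.range ω) : Set ℝ) ⊆ X) := by
  obtain ⟨i, hωi, hsign⟩ := htype
  have hne : (Finset.univ.erase i).Nonempty := by
    obtain ⟨j, hj⟩ := Fintype.exists_ne_of_one_lt_card (by simp; omega) i
    exact ⟨j, Finset.mem_erase.2 ⟨hj, Finset.mem_univ j⟩⟩
  constructor
  · rcases hsign with hpos | hneg
    · set m := (Finset.univ.erase i).inf' hne ω with hm
      have hmpos : 0 < m :=
        (Finset.lt_inf'_iff hne).2 fun j hj => hpos j (Finset.ne_of_mem_erase hj)
      refine closedOfSlices _ fun N => sliceFinite ω m hmpos (fun j => ?_) N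
      by_cases hj : j = i
      · exact Or.inl (hj ▸ hωi)
      · exact Or.inr (Finset.inf'_le _ (Finset.mem_erase.2 ⟨hj, Finset.mem_univ j⟩))
    · set ω' : Fin n → ℝ := fun j => -ω j with hω'
      have hkey : (AddSubmonoid.closure (Set.range ω) : Set ℝ) =
          -(AddSubmonoid.closure (Set.range ω') : Set ℝ) := by
        ext x
        simp only [Set.mem_neg, SetLike.mem_coe, memRepIff, hω']
        constructor
        · rintro ⟨c, rfl⟩
          exact ⟨c, by simp [mul_neg]⟩
        · rintro ⟨c, hc⟩
          refine ⟨c, ?_⟩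
          have : -x = -∑ j, (c j : ℝ) * ω j := by simpa [mul_neg] using hc
          linarith [neg_inj.1 this]
      rw [hkey]
      apply IsClosed.neg
      set m := (Finset.univ.erase i).inf' hne ω' with hm
      have hmpos : 0 < m := by
        refine (Finset.lt_inf'_iff hne).2 fun j hj => ?_
        simp only [hω']
        linarith [hneg j (Finset.ne_of_mem_erase hj)]
      refine closedOfSlices _ fun N => sliceFinite ω' m hmpos (fun j => ?_) N
      by_cases hj : j = i
      · exact Or.inl (by simp [hω', hj, hωi])
      · exact Or.inr (Finset.inf'_le _ (Finset.mem_erase.2 ⟨hj, Finset.mem_univ j⟩))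
  · intro X hX
    constructor
    · rintro ⟨h1, -⟩ y hy
      rw [Set.mem_add] at hy
      obtain ⟨x, hx, s, hs, rfl⟩ := hy
      have aux : ∀ s ∈ AddSubmonoid.closure (Set.range ω), ∀ x ∈ X, x + s ∈ X := by
        intro s hs
        induction hs using AddSubmonoid.closure_induction with
        | mem y hy =>
            obtain ⟨j, rfl⟩ := hy
            exact fun x hx => h1 x hx j
        | zero => intro x hx; simpa using hx
        | add a b ha hb iha ihb =>
            intro x hx
            rw [← add_assoc]
            exact ihb _ (iha x hx)
      exact aux s hs x hx
    · intro hsub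
      refine ⟨fun x hx j => hsub ⟨x, hx, ω j, AddSubmonoid.subset_closure ⟨j, rfl⟩, rfl⟩,
        fun x hx => ⟨i, by simpa [hωi] using hx⟩⟩
end
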